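/- Let σ be a sort of a well-defined ADT. If there are two distinct paths from σ to itself in the dependency graph D that are not repetitions of one another, then there exist two incomparable constructor terms t₁[•], t₂[•] of sort σ with holes of sort σ; consequently, by the expansion lemma for incomparable terms, σ is expanding. -/

import Mathlib

structure ADTSig where
  numSorts : ℕ
  numCtors : ℕ
  ctorArgs : Fin numCtors → List (Fin numSorts)
  ctorRes : Fin numCtors → Fin numSorts

namespace ADTSig

inductive Term (S : ADTSig) : Fin S.numSorts → Type where
  | mk (f : Fin S.numCtors)
      (args : (i : Fin (S.ctorArgs f).length) → Term S ((S.ctorArgs f).get i)) :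
      Term S (S.ctorRes f)

def Term.size {S : ADTSig} : {σ : Fin S.numSorts} → Term S σ → ℕ
  | _, .mk _ args => 1 + ∑ i, (args i).size

def Term.head {S : ADTSig} : {σ : Fin S.numSorts} → Term S σ → Fin S.numCtors
  | _, .mk f _ => f

def WellDefined (S : ADTSig) : Prop := ∀ σ, Nonempty (S.Term σ)

def ExpandingSort (S : ADTSig) (σ : Fin S.numSorts) : Prop :=
  ∀ n : ℕ, ∃ b : ℕ, ∀ b' ≥ b,
    (∀ t : S.Term σ, t.size ≠ b') ∨ n ≤ Nat.card {t : S.Term σ // t.size = b'}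

def ExpandingADT (S : ADTSig) : Prop := ∀ σ, ExpandingSort S σ

/-- The size image `𝕊_σ`. -/
def SizeImage (S : ADTSig) (σ : Fin S.numSorts) : Set ℕ :=
  {b | ∃ t : S.Term σ, t.size = b}

/-- The relativised size image `𝕊^f_σ`: sizes of terms not starting with `f`. -/
def RelSizeImage (S : ADTSig) (σ : Fin S.numSorts) (f : Fin S.numCtors) : Set ℕ :=
  {b | ∃ t : S.Term σ, t.head ≠ f ∧ t.size = b}

/-- Vertices of the bipartite dependency graph: sorts and constructors. -/
abbrev DepVertex (S : ADTSig) := Sum (Fin S.numSorts) (Fin S.numCtors)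

/-- Edges of the dependency graph `D`: `(σ₀, f)` for every constructor `f`
with result sort `σ₀`, and `(f, σ_j)` for every argument sort `σ_j` of `f`. -/
def DepEdge (S : ADTSig) : DepVertex S → DepVertex S → Prop
  | .inl σ, .inr f => S.ctorRes f = σ
  | .inr f, .inl σ => σ ∈ S.ctorArgs f
  | .inl _, .inl _ => False
  | .inr _, .inr _ => False

/-- `l` is a (nonempty) path in `D` from `σ` to itself: a closed walk. -/
def IsClosedWalk (S : ADTSig) (σ : Fin S.numSorts) (l : List (DepVertex S)) : Prop :=
  l ≠ [] ∧ List.Chain (DepEdge S) (Sum.inl σ) l ∧ l.getLast? = some (Sum.inl σ)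

/-- The vertex list (after the starting vertex `σ¹ = ss 0`) of the cycle
`σ¹ → f¹ → σ² → f² → ⋯ → fⁿ → σ¹` given by `ss`, `fs`. -/
def cycleList (S : ADTSig) (n : ℕ) (ss : Fin (n + 1) → Fin S.numSorts)
    (fs : Fin (n + 1) → Fin S.numCtors) : List (DepVertex S) :=
  ((List.finRange (n + 1)).map (fun i => [Sum.inr (fs i), Sum.inl (ss (i + 1))])).flatten

/-- Constructor terms with exactly one hole `•` of sort `τ`; `Ctx S τ σ` is a
term of sort `σ` with a hole of sort `τ`. -/
inductive Ctx (S : ADTSig) (τ : Fin S.numSorts) : Fin S.numSorts → Type where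
  | hole : Ctx S τ τ
  | node (f : Fin S.numCtors) (i : Fin (S.ctorArgs f).length)
      (c : Ctx S τ ((S.ctorArgs f).get i))
      (side : (j : Fin (S.ctorArgs f).length) → j ≠ i →
         S.Term ((S.ctorArgs f).get j)) :
      Ctx S τ (S.ctorRes f)

/-- `c.fill t` = `c[t]`, filling the hole of `c` with the term `t`. -/
def Ctx.fill {S : ADTSig} {τ : Fin S.numSorts} :
    {σ : Fin S.numSorts} → Ctx S τ σ → S.Term τ → S.Term σ
  | _, .hole, t => t
  | _, .node f i c side, t =>
      Term.mk f (fun j =>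
        if h : j = i then cast (by rw [h]) (c.fill t) else side j h)

/-- The size `|t[•]|` of a term with hole: the number of constructor
occurrences (the hole does not count). -/
def Ctx.csize {S : ADTSig} {τ : Fin S.numSorts} :
    {σ : Fin S.numSorts} → Ctx S τ σ → ℕ
  | _, .hole => 0
  | _, .node f i c side =>
      1 + c.csize + ∑ j, if h : j = i then 0 else (side j h).size

/-- Composition of terms with holes: `t₁[•] ∘ t₂[•] = t₁[t₂[•]]`. -/
def Ctx.comp {S : ADTSig} {τ ρ : Fin S.numSorts} :
    {σ : Fin S.numSorts} → Ctx S τ σ → Ctx S ρ τ → Ctx S ρ σ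
  | _, .hole, d => d
  | _, .node f i c side, d => .node f i (c.comp d) side

/-- `c^i`: the `i`-fold composition of a term with hole with itself. -/
def Ctx.pow {S : ADTSig} {σ : Fin S.numSorts} (c : Ctx S σ σ) : ℕ → Ctx S σ σ
  | 0 => .hole
  | i + 1 => c.comp (c.pow i)

/-- Two terms with holes are incomparable if all their fillings differ. -/
def Incomparable {S : ADTSig} {τ₁ τ₂ σ : Fin S.numSorts}
    (c₁ : Ctx S τ₁ σ) (c₂ : Ctx S τ₂ σ) : Prop :=
  ∀ (s₁ : S.Term τ₁) (s₂ : S.Term τ₂), c₁.fill s₁ ≠ c₂.fill s₂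

end ADTSig

/-!
Read the position of the hole in a term with hole as a word of letters, a letter being a
constructor together with one of its argument positions; a closed walk through `σ` in `D` spells
such a word. If the words `w₁`, `w₂` of the two walks commuted, so would the walks, which would
then be powers of a common walk. Hence `u = w₁w₂` and `v = w₂w₁` are distinct words of the same
length. Fill every argument off the hole path with a fixed term of size at most `M`: the terms with
hole spelled by `u^(M+1)` and by `v` agree down to the first letter where `u` and `v` differ. There
they either have different constructors, or the same constructor with the hole in different
arguments; then one of these arguments is a subterm of size `> M` in the first term and a filler
of size `≤ M` in the second, so no two fillings coincide.

For expansion, `d₁ = t₁ ∘ t₂` and `d₂ = t₂ ∘ t₁` are incomparable and have the same size `m`, so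
the `2ᵏ` words of length `k` in `d₁, d₂` send any term `s` to `2ᵏ` distinct terms of size
`|s| + k m`. As the sizes of terms of sort `σ` are closed under adding `m`, every large enough
size is of that form.
-/

theorem List.exists_eq_append_cons_of_ne {α : Type*} :
    ∀ {u v : List α}, u.length = v.length → u ≠ v →
      ∃ P x y u' v', x ≠ y ∧ u = P ++ x :: u' ∧ v = P ++ y :: v'
  | [], [], _, h => absurd rfl h
  | x :: u, y :: v, hlen, hne => by
    by_cases hxy : x = y
    · subst hxy
      obtain ⟨P, a, b, u', v', hab, rfl, rfl⟩ :=
        exists_eq_append_cons_of_ne (by simpa using hlen) fun h => hne (by rw [h])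
      exact ⟨x :: P, a, b, u', v', hab, rfl, rfl⟩
    · exact ⟨[], x, y, u, v, hxy, rfl, rfl⟩

theorem List.exists_eq_flatten_replicate_of_append_comm {α : Type*} {l₁ l₂ : List α}
    (h : l₁ ++ l₂ = l₂ ++ l₁) :
    ∃ (base : List α) (k₁ k₂ : ℕ),
      l₁ = (replicate k₁ base).flatten ∧ l₂ = (replicate k₂ base).flatten := by
  induction hn : l₁.length + l₂.length using Nat.strong_induction_on generalizing l₁ l₂ with
  | _ n ih =>
  wlog hle : l₁.length ≤ l₂.length generalizing l₁ l₂
  · obtain ⟨base, k₂, k₁, h₂, h₁⟩ := this h.symm (by omega) (by omega)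
    exact ⟨base, k₁, k₂, h₁, h₂⟩
  obtain rfl | hne := eq_or_ne l₁ []
  · exact ⟨l₂, 0, 1, by simp, by simp⟩
  obtain ⟨r, rfl⟩ : l₁ <+: l₂ :=
    prefix_of_prefix_length_le (h ▸ prefix_append l₁ l₂) (prefix_append l₂ l₁) hle
  have hr : l₁ ++ r = r ++ l₁ := by simpa using h
  obtain ⟨base, k₁, k, rfl, rfl⟩ :=
    ih _ (by simp only [length_append] at hn; have := length_pos_iff.mpr hne; omega) hr rfl
  exact ⟨base, k₁, k₁ + k, rfl, by rw [replicate_add, flatten_append]⟩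

theorem Nat.exists_add_mul_eq_of_add_mem {A : Set ℕ} {m : ℕ} (hm : 0 < m)
    (hA : ∀ a ∈ A, a + m ∈ A) (k : ℕ) :
    ∃ N, ∀ b ∈ A, N ≤ b → ∃ a ∈ A, a + k * m = b := by
  classical
  have hA' : ∀ a ∈ A, ∀ j, a + j * m ∈ A := by
    intro a ha j
    induction j with
    | zero => simpa using ha
    | succ j ih => simpa [add_mul, ← add_assoc] using hA _ ih
  have hJ : ∀ r, ∃ j, (∃ i, r + i * m ∈ A) → r + j * m ∈ A := fun r =>
    if h : ∃ i, r + i * m ∈ A then ⟨h.choose, fun _ => h.choose_spec⟩ else ⟨0, (absurd · h)⟩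
  choose J hJ using hJ
  refine ⟨∑ r ∈ Finset.range m, (r + (J r + k) * m), fun b hb hN => ?_⟩
  obtain ⟨r, q, hr, rfl⟩ : ∃ r q, r < m ∧ b = r + q * m :=
    ⟨b % m, b / m, Nat.mod_lt b hm, (Nat.mod_add_div' b m).symm⟩
  have hle : r + (J r + k) * m ≤ r + q * m :=
    (Finset.single_le_sum (fun _ _ => Nat.zero_le _) (Finset.mem_range.2 hr)).trans hN
  have hq : J r + k ≤ q := Nat.le_of_mul_le_mul_right (by omega : (J r + k) * m ≤ q * m) hm
  obtain ⟨j, rfl⟩ := Nat.exists_eq_add_of_le hq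
  exact ⟨_, hA' _ (hJ r ⟨_, hb⟩) j, by ring⟩

namespace ADTSig

variable {S : ADTSig}

theorem Term.one_le_size {σ : Fin S.numSorts} (t : S.Term σ) : 1 ≤ t.size := by
  cases t; simp [Term.size]

theorem Term.finite_setOf_size_le (N : ℕ) (σ : Fin S.numSorts) :
    {t : S.Term σ | t.size ≤ N}.Finite := by
  induction N generalizing σ with
  | zero =>
    refine Set.finite_empty.subset fun t (ht : t.size ≤ 0) => ?_
    exact absurd t.one_le_size (by omega)
  | succ N ih =>
    have (f : Fin S.numCtors) (i : Fin (S.ctorArgs f).length) :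
        Finite {u : S.Term ((S.ctorArgs f).get i) // u.size ≤ N} := (ih _).to_subtype
    let g : (Σ f : {f : Fin S.numCtors // S.ctorRes f = σ}, (i : Fin (S.ctorArgs f.1).length) →
        {u : S.Term ((S.ctorArgs f.1).get i) // u.size ≤ N}) → S.Term σ :=
      fun x => x.1.2 ▸ Term.mk x.1.1 fun i => (x.2 i).1
    refine (Set.finite_range g).subset fun t (ht : t.size ≤ N + 1) => ?_
    obtain ⟨f, args⟩ := t
    refine ⟨⟨⟨f, rfl⟩, fun i => ⟨args i, ?_⟩⟩, rfl⟩
    have := Finset.single_le_sum (fun j _ => Nat.zero_le (args j).size) (Finset.mem_univ i)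
    simp only [Term.size] at ht
    omega

namespace Ctx

variable {τ ρ σ : Fin S.numSorts}

theorem size_fill (c : Ctx S τ σ) (t : S.Term τ) : (c.fill t).size = c.csize + t.size := by
  induction c with
  | hole => simp [fill, csize]
  | node f i c side ih =>
    have hsplit : ∀ j, (if h : j = i then cast (by rw [h]) (c.fill t) else side j h).size =
        (if h : j = i then 0 else (side j h).size) + if j = i then (c.fill t).size else 0 := by
      intro j
      split_ifs with h
      · subst h; simp
      · simp
    simp only [fill, csize, Term.size, hsplit, Finset.sum_add_distrib, Finset.sum_ite_eq',
      Finset.mem_univ, if_true, ih]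
    omega

theorem fill_injective (c : Ctx S τ σ) : Function.Injective c.fill := by
  induction c with
  | hole => exact fun _ _ h => h
  | node f i c side ih =>
    intro t t' h
    simp only [fill, Term.mk.injEq] at h
    simpa using ih (by simpa using congrFun h i)

theorem comp_fill (c : Ctx S τ σ) (d : Ctx S ρ τ) (t : S.Term ρ) :
    (c.comp d).fill t = c.fill (d.fill t) := by
  induction c with
  | hole => rfl
  | node f i c side ih =>
    simp only [comp, fill, ih]

theorem csize_comp (c : Ctx S τ σ) (d : Ctx S ρ τ) : (c.comp d).csize = c.csize + d.csize := by
  induction c with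
  | hole => simp [comp, csize]
  | node f i c side ih => simp only [comp, csize, ih]; omega

end Ctx

section Expansion

variable {σ : Fin S.numSorts} {c₁ c₂ : Ctx S σ σ}

theorem Incomparable.comp_swap (h : Incomparable c₁ c₂) :
    Incomparable (c₁.comp c₂) (c₂.comp c₁) := by
  intro s₁ s₂ heq
  rw [Ctx.comp_fill, Ctx.comp_fill] at heq
  exact h _ _ heq

theorem Incomparable.csize_pos {τ : Fin S.numSorts} {c : Ctx S τ σ}
    (h : Incomparable c₁ c) (s : S.Term τ) : 0 < c₁.csize := by
  cases c₁ with
  | hole => exact absurd rfl (h (c.fill s) s)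
  | node => simp [Ctx.csize]

def Ctx.ofBools (d₁ d₂ : Ctx S σ σ) : List Bool → Ctx S σ σ
  | [] => .hole
  | b :: w => (cond b d₁ d₂).comp (ofBools d₁ d₂ w)

theorem Ctx.csize_ofBools (hsize : c₁.csize = c₂.csize) (w : List Bool) :
    (ofBools c₁ c₂ w).csize = w.length * c₁.csize := by
  induction w with
  | nil => simp [ofBools, csize]
  | cons b w ih => cases b <;> simp [ofBools, csize_comp, ih, hsize] <;> ring

theorem Incomparable.ofBools (h : Incomparable c₁ c₂) {w w' : List Bool}
    (hlen : w.length = w'.length) (hne : w ≠ w') :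
    Incomparable (Ctx.ofBools c₁ c₂ w) (Ctx.ofBools c₁ c₂ w') := by
  induction w generalizing w' with
  | nil => cases w' <;> simp_all
  | cons b w ih =>
    obtain _ | ⟨b', w'⟩ := w'
    · simp at hlen
    intro s s' heq
    simp only [Ctx.ofBools, Ctx.comp_fill] at heq
    by_cases hbb : b = b'
    · subst hbb
      exact ih (by simpa using hlen) (by simpa using hne) _ _ ((Ctx.fill_injective _) heq)
    · obtain ⟨rfl, rfl⟩ | ⟨rfl, rfl⟩ : b = true ∧ b' = false ∨ b = false ∧ b' = true := by
        cases b <;> cases b' <;> simp_all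
      · exact h _ _ heq
      · exact h _ _ heq.symm

theorem Incomparable.pow_two_le_card (h : Incomparable c₁ c₂) (hsize : c₁.csize = c₂.csize)
    (k : ℕ) (s : S.Term σ) :
    2 ^ k ≤ Nat.card {t : S.Term σ // t.size = s.size + k * c₁.csize} := by
  have : Finite {t : S.Term σ // t.size = s.size + k * c₁.csize} :=
    ((Term.finite_setOf_size_le _ σ).subset fun t (ht : _ = _) => ht.le).to_subtype
  let F : (Fin k → Bool) → {t : S.Term σ // t.size = s.size + k * c₁.csize} := fun w =>
    ⟨(Ctx.ofBools c₁ c₂ (List.ofFn w)).fill s, by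
      rw [Ctx.size_fill, Ctx.csize_ofBools hsize, List.length_ofFn, add_comm]⟩
  have hF : Function.Injective F := fun w w' hww => by
    by_contra hne
    exact h.ofBools (by simp) (mt List.ofFn_inj.mp hne) s s (congrArg Subtype.val hww)
  simpa using Nat.card_le_card_of_injective F hF

theorem Incomparable.expandingSort (h : Incomparable c₁ c₂) : ExpandingSort S σ := by
  intro n
  obtain _ | ⟨⟨s₀⟩⟩ := isEmpty_or_nonempty (S.Term σ)
  · exact ⟨0, fun b _ => Or.inl fun t => isEmptyElim t⟩
  have hd := h.comp_swap
  have hsize : (c₁.comp c₂).csize = (c₂.comp c₁).csize := by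
    rw [Ctx.csize_comp, Ctx.csize_comp, add_comm]
  have hclosed : ∀ a ∈ SizeImage S σ, a + (c₁.comp c₂).csize ∈ SizeImage S σ :=
    fun _ ⟨t, ht⟩ => ⟨(c₁.comp c₂).fill t, by rw [Ctx.size_fill, ht, add_comm]⟩
  obtain ⟨N, hN⟩ := Nat.exists_add_mul_eq_of_add_mem (hd.csize_pos s₀) hclosed n
  refine ⟨N, fun b hb => or_iff_not_imp_left.2 fun hb' => ?_⟩
  obtain ⟨_, ⟨s, rfl⟩, rfl⟩ := hN b (not_forall_not.mp hb') hb
  exact Nat.lt_two_pow_self.le.trans (hd.pow_two_le_card hsize n s)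

end Expansion

def Letter (S : ADTSig) : Type := Σ f : Fin S.numCtors, Fin (S.ctorArgs f).length

def Letter.toWalk (a : Letter S) : List (DepVertex S) :=
  [.inr a.1, .inl ((S.ctorArgs a.1).get a.2)]

/-- Read from the root of a term of sort `ρ` downwards, the letters of `w` lead to a position of
sort `τ`. -/
def IsLetterPath : Fin S.numSorts → List (Letter S) → Fin S.numSorts → Prop
  | ρ, [], τ => ρ = τ
  | ρ, a :: w, τ => S.ctorRes a.1 = ρ ∧ IsLetterPath ((S.ctorArgs a.1).get a.2) w τ

theorem IsLetterPath.append {ρ τ τ' : Fin S.numSorts} {w₁ w₂ : List (Letter S)}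
    (h₁ : IsLetterPath ρ w₁ τ) (h₂ : IsLetterPath τ w₂ τ') : IsLetterPath ρ (w₁ ++ w₂) τ' := by
  induction w₁ generalizing ρ with
  | nil => exact (show ρ = τ from h₁) ▸ h₂
  | cons a w ih => exact ⟨h₁.1, ih h₁.2⟩

theorem IsLetterPath.flatten_replicate {σ : Fin S.numSorts} {w : List (Letter S)}
    (h : IsLetterPath σ w σ) (k : ℕ) : IsLetterPath σ (List.replicate k w).flatten σ := by
  induction k with
  | zero => exact rfl
  | succ k ih => exact h.append ih

theorem exists_isLetterPath_of_isChain : ∀ (l : List (DepVertex S)) {τ ρ : Fin S.numSorts},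
    List.IsChain (DepEdge S) (.inl τ :: l) → (.inl τ :: l).getLast (List.cons_ne_nil _ _) = .inl ρ →
    ∃ w, IsLetterPath τ w ρ ∧ l = (w.map Letter.toWalk).flatten
  | [], _, _, _, h => ⟨[], Sum.inl_injective h, rfl⟩
  | .inl _ :: _, _, _, hc, _ => (List.isChain_cons_cons.mp hc).1.elim
  | [.inr _], _, _, _, h => by simp at h
  | .inr _ :: .inr _ :: _, _, _, hc, _ =>
    (List.isChain_cons_cons.mp (List.isChain_cons_cons.mp hc).2).1.elim
  | .inr f :: .inl τ' :: rest, _, _, hc, hl => by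
    rw [List.isChain_cons_cons, List.isChain_cons_cons] at hc
    obtain ⟨hf, hτ', hc⟩ := hc
    obtain ⟨i, rfl⟩ := List.mem_iff_get.mp hτ'
    obtain ⟨w, hw, rfl⟩ := exists_isLetterPath_of_isChain rest hc
      (by simpa only [List.getLast_cons_cons] using hl)
    exact ⟨⟨f, i⟩ :: w, ⟨hf, hw⟩, rfl⟩

theorem IsClosedWalk.exists_isLetterPath {σ : Fin S.numSorts} {l : List (DepVertex S)}
    (h : IsClosedWalk S σ l) : ∃ w, IsLetterPath σ w σ ∧ l = (w.map Letter.toWalk).flatten := by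
  obtain ⟨hne, hc, hl⟩ := h
  refine exists_isLetterPath_of_isChain l hc ?_
  rw [List.getLast_cons hne]
  simpa [List.getLast?_eq_some_getLast hne] using hl

theorem Term.head_cast {σ σ' : Fin S.numSorts} (h : σ = σ') (t : S.Term σ) :
    (h ▸ t).head = t.head := by
  subst h; rfl

namespace Ctx

theorem fill_cast {τ σ σ' : Fin S.numSorts} (h : σ = σ') (c : Ctx S τ σ) (s : S.Term τ) :
    (h ▸ c).fill s = h ▸ c.fill s := by
  subst h; rfl

variable (B : ∀ τ, S.Term τ) {τ : Fin S.numSorts}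

def ofPath : (w : List (Letter S)) → {ρ : Fin S.numSorts} → IsLetterPath ρ w τ → Ctx S τ ρ
  | [], _, h => h ▸ .hole
  | a :: w, _, h => h.1 ▸ .node a.1 a.2 (ofPath w h.2) fun _ _ => B _

theorem length_le_csize_ofPath :
    ∀ (w : List (Letter S)) {ρ : Fin S.numSorts} (h : IsLetterPath ρ w τ),
      w.length ≤ (ofPath B w h).csize
  | [], _, h => by simp
  | a :: w, _, ⟨rfl, h⟩ => by
    have := length_le_csize_ofPath w h
    simp only [ofPath, csize, List.length_cons]
    omega

theorem incomparable_ofPath {M : ℕ} (hB : ∀ τ, (B τ).size ≤ M) {x y : Letter S} (hxy : x ≠ y)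
    {U V : List (Letter S)} (hU : M ≤ U.length) {τ₁ τ₂ : Fin S.numSorts} :
    ∀ (P : List (Letter S)) {ρ : Fin S.numSorts} (h₁ : IsLetterPath ρ (P ++ x :: U) τ₁)
      (h₂ : IsLetterPath ρ (P ++ y :: V) τ₂), Incomparable (ofPath B _ h₁) (ofPath B _ h₂)
  | [], _, ⟨hx, h₁⟩, ⟨hy, h₂⟩, s₁, s₂, heq => by
    obtain ⟨f, i⟩ := x
    obtain ⟨g, j⟩ := y
    subst hx
    obtain rfl | hfg := eq_or_ne g f
    · have hij : i ≠ j := fun h => hxy (h ▸ rfl)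
      simp only [List.nil_append, ofPath, fill, Term.mk.injEq] at heq
      have hi := congrArg Term.size (congrFun heq i)
      rw [dif_pos rfl, dif_neg hij, cast_eq, size_fill] at hi
      have := length_le_csize_ofPath B U h₁
      have := s₁.one_le_size
      have := hB ((S.ctorArgs g).get i)
      omega
    · have := congrArg Term.head heq
      simp only [List.nil_append, ofPath, fill_cast, Term.head_cast, fill] at this
      exact hfg this.symm
  | a :: P, _, ⟨rfl, h₁⟩, ⟨_, h₂⟩, s₁, s₂, heq => by
    simp only [List.cons_append, ofPath, fill, Term.mk.injEq] at heq
    exact incomparable_ofPath hB hxy hU P h₁ h₂ s₁ s₂ (by simpa using congrFun heq a.2)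

end Ctx

theorem exists_incomparable_of_isLetterPath (hS : S.WellDefined) {σ : Fin S.numSorts}
    {u v : List (Letter S)} (hu : IsLetterPath σ u σ) (hv : IsLetterPath σ v σ)
    (hlen : u.length = v.length) (huv : u ≠ v) : ∃ t₁ t₂ : Ctx S σ σ, Incomparable t₁ t₂ := by
  have B : ∀ τ, S.Term τ := fun τ => (hS τ).some
  obtain ⟨M, hM⟩ := Finite.exists_le fun τ => (B τ).size
  obtain ⟨P, x, y, u', v', hxy, rfl, rfl⟩ := List.exists_eq_append_cons_of_ne hlen huv
  have hU : IsLetterPath σ (P ++ x :: (u' ++ (List.replicate M (P ++ x :: u')).flatten)) σ := by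
    simpa [List.replicate_succ] using hu.flatten_replicate (M + 1)
  have hM' : M ≤ (u' ++ (List.replicate M (P ++ x :: u')).flatten).length := by
    simp only [List.length_append, List.length_flatten, List.map_replicate, List.sum_replicate,
      smul_eq_mul, List.length_cons]
    nlinarith
  exact ⟨_, _, Ctx.incomparable_ofPath B hM hxy hM' P hU hv⟩

end ADTSig

open ADTSig in
theorem two_paths_incomparable_expanding_general (S : ADTSig) (hS : S.WellDefined)
    (σ : Fin S.numSorts) (l₁ l₂ : List (DepVertex S))
    (h₁ : IsClosedWalk S σ l₁) (h₂ : IsClosedWalk S σ l₂)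
    (hnorep : ¬ ∃ (base : List (DepVertex S)) (k₁ k₂ : ℕ),
       l₁ = (List.replicate k₁ base).flatten ∧
       l₂ = (List.replicate k₂ base).flatten) :
    (∃ t₁ t₂ : Ctx S σ σ, Incomparable t₁ t₂) ∧ ExpandingSort S σ := by
  obtain ⟨w₁, hw₁, rfl⟩ := h₁.exists_isLetterPath
  obtain ⟨w₂, hw₂, rfl⟩ := h₂.exists_isLetterPath
  have hcomm : w₁ ++ w₂ ≠ w₂ ++ w₁ := fun h => hnorep <|
    List.exists_eq_flatten_replicate_of_append_comm <| by
      simp only [← List.flatten_append, ← List.map_append, h]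
  obtain ⟨t₁, t₂, ht⟩ := exists_incomparable_of_isLetterPath hS (hw₁.append hw₂)
    (hw₂.append hw₁) (by simp [add_comm]) hcomm
  exact ⟨⟨t₁, t₂, ht⟩, ht.expandingSort⟩

open ADTSig in
/-- If there are two distinct paths from a sort `σ` to itself in the
dependency graph `D` that are not repetitions of one another (i.e., they are
not both repetitions of a common path), then there exist two incomparable
constructor terms `t₁[•], t₂[•]` of sort `σ` with holes of sort `σ`;
consequently, by the expansion lemma for incomparable terms, `σ` is
expanding. -/
theorem two_paths_incomparable_expanding (S : ADTSig) (hS : S.WellDefined)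
    (σ : Fin S.numSorts) (l₁ l₂ : List (DepVertex S))
    (h₁ : IsClosedWalk S σ l₁) (h₂ : IsClosedWalk S σ l₂)
    (hne : l₁ ≠ l₂)
    (hnorep : ¬ ∃ (base : List (DepVertex S)) (k₁ k₂ : ℕ),
       l₁ = (List.replicate k₁ base).flatten ∧
       l₂ = (List.replicate k₂ base).flatten) :
    (∃ t₁ t₂ : Ctx S σ σ, Incomparable t₁ t₂) ∧ ExpandingSort S σ :=
  two_paths_incomparable_expanding_general S hS σ l₁ l₂ h₁ h₂ hnorep
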